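/- Let 0 < ε < 1, let Ω ∈ ℝ^{d×m} be an ε-embedding of a subspace V ⊆ ℝ^m, and let M ∈ ℝ^{m×n} be a matrix with range(M) ⊆ V. Then for every i with 1 ≤ i ≤ min(d,n), one has √(1−ε)·σ_i(M) ≤ σ_i(ΩM) ≤ √(1+ε)·σ_i(M). -/

import Mathlib

open Matrix

/-- Euclidean (ℓ₂) norm of a vector in `ℝ^m`. -/
noncomputable def norm2 {m : ℕ} (x : Fin m → ℝ) : ℝ := Real.sqrt (x ⬝ᵥ x)

/-- `Ω` is an `ε`-embedding of the subspace `V ⊆ ℝ^m`: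
`|⟨Ωx, Ωy⟩ − ⟨x, y⟩| ≤ ε‖x‖₂‖y‖₂` for all `x, y ∈ V`. -/
def IsEmbedding {d m : ℕ} (ε : ℝ) (Ω : Matrix (Fin d) (Fin m) ℝ)
    (V : Submodule ℝ (Fin m → ℝ)) : Prop :=
  ∀ x ∈ V, ∀ y ∈ V, |(Ω.mulVec x) ⬝ᵥ (Ω.mulVec y) - x ⬝ᵥ y| ≤ ε * norm2 x * norm2 y

/-- The `i`-th largest singular value (`0`-indexed) of a real matrix `A`:
the square root of the `i`-th largest eigenvalue of `AᵀA`. -/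
noncomputable def singularValues {m n : ℕ} (A : Matrix (Fin m) (Fin n) ℝ) (i : Fin n) : ℝ :=
  Real.sqrt ((Matrix.isHermitian_conjTranspose_mul_self A).eigenvalues
    (Tuple.sort (Matrix.isHermitian_conjTranspose_mul_self A).eigenvalues i.rev))

/-- `P` is a permutation matrix. -/
def IsPermMatrix {n : ℕ} (P : Matrix (Fin n) (Fin n) ℝ) : Prop :=
  ∃ σ : Equiv.Perm (Fin n), P = σ.permMatrix ℝ

/-- `A = Q * [[R₁₁, R₁₂], [0, R₂₂]]` is a partial QR factorization with block size `k`,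
where `A` is `(k+m') × (k+n')`, `Q` is orthogonal and `R₁₁` is `k × k` upper triangular. -/
def PartialQR {k m' n' : ℕ} (A : Matrix (Fin (k + m')) (Fin (k + n')) ℝ)
    (Q : Matrix (Fin (k + m')) (Fin (k + m')) ℝ)
    (R11 : Matrix (Fin k) (Fin k) ℝ) (R12 : Matrix (Fin k) (Fin n') ℝ)
    (R22 : Matrix (Fin m') (Fin n') ℝ) : Prop :=
  Qᵀ * Q = 1 ∧ (∀ i j : Fin k, (j : ℕ) < (i : ℕ) → R11 i j = 0) ∧
    A = Q * (Matrix.reindex finSumFinEquiv finSumFinEquiv (Matrix.fromBlocks R11 R12 0 R22))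

/-- `ω_i(A)`: the ℓ₂-norm of the `i`-th row of `A⁻¹`. -/
noncomputable def omega_ {k : ℕ} (A : Matrix (Fin k) (Fin k) ℝ) (i : Fin k) : ℝ :=
  norm2 (fun l => A⁻¹ i l)

/-- `γ_j(B)`: the ℓ₂-norm of the `j`-th column of `B`. -/
noncomputable def gamma_ {p q : ℕ} (B : Matrix (Fin p) (Fin q) ℝ) (j : Fin q) : ℝ :=
  norm2 (fun l => B l j)

/-- `ρ(R, k)` for `R = [[R₁₁, R₁₂], [0, R₂₂]]`:
`max_{i,j} sqrt(((R₁₁⁻¹R₁₂)_{i,j})² + ω_i(R₁₁)²·γ_j(R₂₂)²)`. -/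
noncomputable def rho {k m' n' : ℕ} (R11 : Matrix (Fin k) (Fin k) ℝ)
    (R12 : Matrix (Fin k) (Fin n') ℝ) (R22 : Matrix (Fin m') (Fin n') ℝ) : ℝ :=
  ⨆ i : Fin k, ⨆ j : Fin n',
    Real.sqrt (((R11⁻¹ * R12) i j) ^ 2 + (omega_ R11 i) ^ 2 * (gamma_ R22 j) ^ 2)

/-- The volume of `A ∈ ℝ^{m×n}`: `V(A) = sqrt(det(AᵀA))`. -/
noncomputable def vol {m n : ℕ} (A : Matrix (Fin m) (Fin n) ℝ) : ℝ :=
  Real.sqrt (Matrix.det (Aᵀ * A))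

/-- The angle between two vectors: `arccos(⟨u,w⟩/(‖u‖₂‖w‖₂))`. -/
noncomputable def angleVec {m : ℕ} (u w : Fin m → ℝ) : ℝ :=
  Real.arccos ((u ⬝ᵥ w) / (norm2 u * norm2 w))

/-- The angle between a vector and a subspace:
`arccos( max over nonzero u ∈ K of ⟨v,u⟩/(‖v‖₂‖u‖₂) )`. -/
noncomputable def angleSub {m : ℕ} (v : Fin m → ℝ) (K : Submodule ℝ (Fin m → ℝ)) : ℝ :=
  Real.arccos (sSup {c : ℝ | ∃ u ∈ K, u ≠ 0 ∧ c = (v ⬝ᵥ u) / (norm2 v * norm2 u)})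

/-- `P` is the orthogonal projector onto the subspace `K` (w.r.t. the dot product). -/
def IsOrthProj {m : ℕ} (K : Submodule ℝ (Fin m → ℝ))
    (P : (Fin m → ℝ) →ₗ[ℝ] (Fin m → ℝ)) : Prop :=
  (∀ v, P v ∈ K) ∧ (∀ u ∈ K, P u = u) ∧ (∀ v, ∀ u ∈ K, (v - P v) ⬝ᵥ u = 0)

/-- Thin QR factorization `A = Q R` with `Q ∈ ℝ^{m×k}` having orthonormal columns and
`R ∈ ℝ^{k×k}` upper triangular. -/
def ThinQR {m k : ℕ} (A Q : Matrix (Fin m) (Fin k) ℝ) (R : Matrix (Fin k) (Fin k) ℝ) : Prop :=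
  Qᵀ * Q = 1 ∧ (∀ a b : Fin k, (b : ℕ) < (a : ℕ) → R a b = 0) ∧ A = Q * R

/-- Frobenius norm of a real matrix. -/
noncomputable def frobNorm {p q : ℕ} (A : Matrix (Fin p) (Fin q) ℝ) : ℝ :=
  Real.sqrt (∑ i, ∑ j, A i j ^ 2)

/-- Spectral norm of a real matrix: sup of `‖Ax‖₂` over the unit ball. -/
noncomputable def specNorm {p q : ℕ} (A : Matrix (Fin p) (Fin q) ℝ) : ℝ :=
  sSup {r : ℝ | ∃ x : Fin q → ℝ, norm2 x ≤ 1 ∧ r = norm2 (A.mulVec x)}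
section auxSV
open Matrix Finset

section aux
variable {n : ℕ}

lemma sum_dot {ι : Type*} [Fintype ι] (f : ι → Fin n → ℝ) (y : Fin n → ℝ) :
    (∑ i, f i) ⬝ᵥ y = ∑ i, f i ⬝ᵥ y := by
  simp only [dotProduct, Finset.sum_apply, Finset.sum_mul]
  rw [Finset.sum_comm]

lemma dot_sum {ι : Type*} [Fintype ι] (f : ι → Fin n → ℝ) (y : Fin n → ℝ) :
    y ⬝ᵥ (∑ i, f i) = ∑ i, y ⬝ᵥ f i := by
  simp only [dotProduct, Finset.sum_apply, Finset.mul_sum]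
  rw [Finset.sum_comm]

lemma dot_ortho_li {ι : Type*} [Fintype ι] [DecidableEq ι] (w : ι → (Fin n → ℝ))
    (hw : ∀ i j, w i ⬝ᵥ w j = if i = j then 1 else 0) : LinearIndependent ℝ w := by
  rw [Fintype.linearIndependent_iff]
  intro g hg j
  have h2 := congrArg (fun v => v ⬝ᵥ w j) hg
  simp only [sum_dot, smul_dotProduct, hw, smul_eq_mul, mul_ite, mul_one,
    mul_zero, Finset.sum_ite_eq, Finset.sum_ite_eq', Finset.mem_univ, if_true, zero_dotProduct] at h2
  exact h2

lemma quad_eq {ι : Type*} [Fintype ι] [DecidableEq ι] {A : Matrix (Fin n) (Fin n) ℝ}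
    (w : ι → (Fin n → ℝ)) (lam : ι → ℝ) (g : ι → ℝ)
    (hw : ∀ i j, w i ⬝ᵥ w j = if i = j then 1 else 0)
    (hA : ∀ i, A.mulVec (w i) = lam i • w i) :
    (∑ i, g i • w i) ⬝ᵥ A.mulVec (∑ i, g i • w i) = ∑ i, lam i * g i ^ 2 ∧
    (∑ i, g i • w i) ⬝ᵥ (∑ i, g i • w i) = ∑ i, g i ^ 2 := by
  have hmv : A.mulVec (∑ i, g i • w i) = ∑ i, (g i * lam i) • w i := by
    rw [show A.mulVec (∑ i, g i • w i) = A.mulVecLin (∑ i, g i • w i) from rfl, map_sum]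
    refine Finset.sum_congr rfl fun i _ => ?_
    rw [LinearMap.map_smul]
    simp [Matrix.mulVecLin_apply, hA i, smul_smul, mul_comm]
  constructor
  · rw [hmv, sum_dot]
    have key : ∀ i, (g i • w i) ⬝ᵥ (∑ j, (g j * lam j) • w j) = lam i * g i ^ 2 := fun i => by
      rw [smul_dotProduct, dot_sum]
      simp only [dotProduct_smul, hw, smul_eq_mul, mul_ite, mul_one, mul_zero,
        Finset.sum_ite_eq, Finset.sum_ite_eq', Finset.mem_univ, if_true]
      ring
    exact Finset.sum_congr rfl fun i _ => key i
  · rw [sum_dot]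
    have key : ∀ i, (g i • w i) ⬝ᵥ (∑ j, g j • w j) = g i ^ 2 := fun i => by
      rw [smul_dotProduct, dot_sum]
      simp only [dotProduct_smul, hw, smul_eq_mul, mul_ite, mul_one, mul_zero,
        Finset.sum_ite_eq, Finset.sum_ite_eq', Finset.mem_univ, if_true]
      ring
    exact Finset.sum_congr rfl fun i _ => key i

lemma eigenvectorBasis_dot {A : Matrix (Fin n) (Fin n) ℝ} (hA : A.IsHermitian) (i j : Fin n) :
    (hA.eigenvectorBasis i : Fin n → ℝ) ⬝ᵥ (hA.eigenvectorBasis j : Fin n → ℝ)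
      = if i = j then 1 else 0 := by
  have h0 := hA.eigenvectorBasis.orthonormal
  rw [orthonormal_iff_ite] at h0
  have h := h0 i j
  rw [PiLp.inner_apply] at h
  simpa [dotProduct, RCLike.inner_apply, mul_comm] using h

end aux
open Matrix Finset Module

lemma eig_mono {n : ℕ} {A B : Matrix (Fin n) (Fin n) ℝ} (hA : A.IsHermitian) (hB : B.IsHermitian)
    (a b : ℝ) (ha : 0 ≤ a) (hb : 0 ≤ b)
    (h : ∀ x : Fin n → ℝ, a * (x ⬝ᵥ A.mulVec x) ≤ b * (x ⬝ᵥ B.mulVec x)) (j : Fin n) :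
    a * hA.eigenvalues (Tuple.sort hA.eigenvalues j) ≤
      b * hB.eigenvalues (Tuple.sort hB.eigenvalues j) := by
  classical
  set σA := Tuple.sort hA.eigenvalues with hσA
  set σB := Tuple.sort hB.eigenvalues with hσB
  set cA := hA.eigenvalues (σA j) with hcA
  set cB := hB.eigenvalues (σB j) with hcB
  let wA : (Set.Ici j) → (Fin n → ℝ) := fun i => (hA.eigenvectorBasis (σA i.1) : Fin n → ℝ)
  let wB : (Set.Iic j) → (Fin n → ℝ) := fun i => (hB.eigenvectorBasis (σB i.1) : Fin n → ℝ)
  have hwA : ∀ i k, wA i ⬝ᵥ wA k = if i = k then 1 else 0 := by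
    intro i k
    rw [show wA i ⬝ᵥ wA k = _ from eigenvectorBasis_dot hA (σA i.1) (σA k.1)]
    by_cases hik : i = k <;> simp [hik, σA.injective.eq_iff, Subtype.coe_injective.eq_iff]
  have hwB : ∀ i k, wB i ⬝ᵥ wB k = if i = k then 1 else 0 := by
    intro i k
    rw [show wB i ⬝ᵥ wB k = _ from eigenvectorBasis_dot hB (σB i.1) (σB k.1)]
    by_cases hik : i = k <;> simp [hik, σB.injective.eq_iff, Subtype.coe_injective.eq_iff]
  set S := Submodule.span ℝ (Set.range wA) with hS
  set T := Submodule.span ℝ (Set.range wB) with hT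
  have hfS : finrank ℝ S = n - j := by
    rw [hS, finrank_span_eq_card (dot_ortho_li wA hwA), ← Set.toFinset_card, Set.toFinset_Ici, Fin.card_Ici]
  have hfT : finrank ℝ T = j + 1 := by
    rw [hT, finrank_span_eq_card (dot_ortho_li wB hwB), ← Set.toFinset_card, Set.toFinset_Iic, Fin.card_Iic]
  have hsup : finrank ℝ (S ⊔ T : Submodule ℝ (Fin n → ℝ)) ≤ n := by
    refine le_trans (Submodule.finrank_le _) ?_
    rw [Module.finrank_fin_fun]
  have hinf : 0 < finrank ℝ (S ⊓ T : Submodule ℝ (Fin n → ℝ)) := by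
    have := Submodule.finrank_sup_add_finrank_inf_eq S T
    have hj := j.isLt
    omega
  obtain ⟨⟨x, hxST⟩, hx0⟩ := Module.finrank_pos_iff_exists_ne_zero.mp hinf
  have hx0' : x ≠ 0 := fun hh => hx0 (Subtype.ext hh)
  obtain ⟨gA, hgA⟩ := (Submodule.mem_span_range_iff_exists_fun ℝ).mp hxST.1
  obtain ⟨gB, hgB⟩ := (Submodule.mem_span_range_iff_exists_fun ℝ).mp hxST.2
  have hqA := quad_eq wA (fun i => hA.eigenvalues (σA i.1)) gA hwA
    (fun i => hA.mulVec_eigenvectorBasis (σA i.1))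
  have hqB := quad_eq wB (fun i => hB.eigenvalues (σB i.1)) gB hwB
    (fun i => hB.mulVec_eigenvectorBasis (σB i.1))
  rw [hgA] at hqA
  rw [hgB] at hqB
  have hxx : 0 < x ⬝ᵥ x := by
    rcases lt_or_eq_of_le (Finset.sum_nonneg fun i _ => mul_self_nonneg (x i) :
      (0:ℝ) ≤ x ⬝ᵥ x) with h' | h'
    · exact h'
    · exact absurd (dotProduct_self_eq_zero.mp h'.symm) hx0'
  have hAx : cA * (x ⬝ᵥ x) ≤ x ⬝ᵥ A.mulVec x := by
    rw [hqA.1, hqA.2, Finset.mul_sum]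
    refine Finset.sum_le_sum fun i _ => ?_
    exact mul_le_mul_of_nonneg_right
      (Tuple.monotone_sort hA.eigenvalues (i.2 : j ≤ i.1)) (sq_nonneg _)
  have hBx : x ⬝ᵥ B.mulVec x ≤ cB * (x ⬝ᵥ x) := by
    rw [hqB.1, hqB.2, Finset.mul_sum]
    refine Finset.sum_le_sum fun i _ => ?_
    exact mul_le_mul_of_nonneg_right
      (Tuple.monotone_sort hB.eigenvalues (i.2 : i.1 ≤ j)) (sq_nonneg _)
  have chain : a * cA * (x ⬝ᵥ x) ≤ b * cB * (x ⬝ᵥ x) := by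
    calc a * cA * (x ⬝ᵥ x) = a * (cA * (x ⬝ᵥ x)) := by ring
    _ ≤ a * (x ⬝ᵥ A.mulVec x) := mul_le_mul_of_nonneg_left hAx ha
    _ ≤ b * (x ⬝ᵥ B.mulVec x) := h x
    _ ≤ b * (cB * (x ⬝ᵥ x)) := mul_le_mul_of_nonneg_left hBx hb
    _ = b * cB * (x ⬝ᵥ x) := by ring
  exact le_of_mul_le_mul_right chain hxx

end auxSV

/-- singular values are preserved by sketching, up to `√(1±ε)`. -/
theorem stmt_1 {d m n : ℕ} (ε : ℝ) (hε0 : 0 < ε) (hε1 : ε < 1)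
    (Ω : Matrix (Fin d) (Fin m) ℝ) (V : Submodule ℝ (Fin m → ℝ))
    (hΩ : IsEmbedding ε Ω V)
    (M : Matrix (Fin m) (Fin n) ℝ) (hM : LinearMap.range M.mulVecLin ≤ V) :
    ∀ i : Fin n, (i : ℕ) < min d n →
      Real.sqrt (1 - ε) * singularValues M i ≤ singularValues (Ω * M) i ∧
      singularValues (Ω * M) i ≤ Real.sqrt (1 + ε) * singularValues M i := by
  intro i _
  have quad : ∀ (p q : ℕ) (A : Matrix (Fin p) (Fin q) ℝ) (x : Fin q → ℝ),
      x ⬝ᵥ (Aᵀ * A).mulVec x = (A.mulVec x) ⬝ᵥ (A.mulVec x) := by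
    intro p q A x
    rw [← Matrix.mulVec_mulVec, Matrix.dotProduct_mulVec, Matrix.vecMul_transpose]
  have key : ∀ x : Fin n → ℝ,
      (1 - ε) * (x ⬝ᵥ (Mᵀ * M).mulVec x) ≤ x ⬝ᵥ ((Ω * M)ᵀ * (Ω * M)).mulVec x ∧
      x ⬝ᵥ ((Ω * M)ᵀ * (Ω * M)).mulVec x ≤ (1 + ε) * (x ⬝ᵥ (Mᵀ * M).mulVec x) := by
    intro x
    set y := M.mulVec x with hy
    have hyV : y ∈ V := hM ⟨x, rfl⟩
    have hemb := hΩ y hyV y hyV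
    have hnn : norm2 y * norm2 y = y ⬝ᵥ y :=
      Real.mul_self_sqrt (Finset.sum_nonneg fun k _ => mul_self_nonneg (y k))
    rw [mul_assoc, hnn, abs_le] at hemb
    have h1 : x ⬝ᵥ (Mᵀ * M).mulVec x = y ⬝ᵥ y := by rw [quad]
    have h2 : x ⬝ᵥ ((Ω * M)ᵀ * (Ω * M)).mulVec x = (Ω.mulVec y) ⬝ᵥ (Ω.mulVec y) := by
      rw [quad, Matrix.mulVec_mulVec]
    rw [h1, h2]
    constructor <;> nlinarith [hemb.1, hemb.2]
  have hlow := eig_mono (Matrix.isHermitian_conjTranspose_mul_self M)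
    (Matrix.isHermitian_conjTranspose_mul_self (Ω * M)) (1 - ε) 1 (by linarith) (by linarith)
    (fun x => by rw [one_mul]; exact (key x).1) i.rev
  have hhigh := eig_mono (Matrix.isHermitian_conjTranspose_mul_self (Ω * M))
    (Matrix.isHermitian_conjTranspose_mul_self M) 1 (1 + ε) (by linarith) (by linarith)
    (fun x => by rw [one_mul]; exact (key x).2) i.rev
  rw [one_mul] at hlow hhigh
  unfold singularValues
  constructor
  · rw [← Real.sqrt_mul (by linarith)]
    exact Real.sqrt_le_sqrt hlow
  · rw [← Real.sqrt_mul (by linarith)]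
    exact Real.sqrt_le_sqrt hhigh
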